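/- arXiv:2507.07442 — 6 statements merged into one kernel-verified Lean document; each statement's English description precedes it below -/
import Mathlib

section
/- Let k ∈ ℕ* be even and let z ≥ 0. Then I₁(z) = I₂(z) = (Re(Λ_{1,k}(z)) / √(z² + (kπ)⁴/4)) · P_k(z), where I₁(z) = |e^{Λ_{2,k}(z)} − 1|² ∫₀¹ e^{2x·Re(Λ_{1,k}(z))} cos(kπx) dx and I₂(z) = |e^{Λ_{1,k}(z)} − 1|² ∫₀¹ e^{2x·Re(Λ_{2,k}(z))} cos(kπx) dx. -/
open MeasureTheory Set

noncomputable section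

/-- `λ₁(z)`: the square root of `iz` with argument in `(-π/2, π/2]`. -/
def lam1 (z : ℂ) : ℂ := (Complex.I * z) ^ ((1 : ℂ) / 2)

/-- `λ₂(z) = -λ₁(z)`, the other square root of `iz`. -/
def lam2 (z : ℂ) : ℂ := -lam1 z

/-- `Λ_{1,k}(z) = λ₁(z + i(kπ)²/2)` for real `z`. -/
def Lam1 (k : ℕ) (z : ℝ) : ℂ := lam1 ((z : ℂ) + Complex.I * ((k : ℝ) * Real.pi) ^ 2 / 2)

/-- `Λ_{2,k}(z) = -Λ_{1,k}(z)`. -/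
def Lam2 (k : ℕ) (z : ℝ) : ℂ := -Lam1 k z

/-- `P_k(z) = |e^{Λ_{2,k}(z)} - 1|² (e^{2Re(Λ_{1,k}(z))} - 1)`. -/
def Pk (k : ℕ) (z : ℝ) : ℝ :=
  ‖Complex.exp (Lam2 k z) - 1‖ ^ 2 * (Real.exp (2 * (Lam1 k z).re) - 1)

/-- `I₁(z)`. -/
def I1 (k : ℕ) (z : ℝ) : ℝ :=
  ‖Complex.exp (Lam2 k z) - 1‖ ^ 2
    * ∫ x in (0:ℝ)..1, Real.exp (2 * x * (Lam1 k z).re) * Real.cos ((k : ℝ) * Real.pi * x)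

/-- `I₂(z)`. -/
def I2 (k : ℕ) (z : ℝ) : ℝ :=
  ‖Complex.exp (Lam1 k z) - 1‖ ^ 2
    * ∫ x in (0:ℝ)..1, Real.exp (2 * x * (Lam2 k z).re) * Real.cos ((k : ℝ) * Real.pi * x)

lemma integral_exp_cos (a c : ℝ) (hc : c ≠ 0) :
    ∫ x in (0:ℝ)..1, Real.exp (2 * x * a) * Real.cos (c * x)
      = (Real.exp (2*a) * (2*a*Real.cos c + c*Real.sin c) - 2*a) / (4*a^2 + c^2) := by
  have hD : 4*a^2 + c^2 ≠ 0 := by positivity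
  have key : ∀ x ∈ Set.uIcc (0:ℝ) 1, HasDerivAt
      (fun x => Real.exp (2*a*x) * (2*a*Real.cos (c*x) + c*Real.sin (c*x)) / (4*a^2+c^2))
      (Real.exp (2 * x * a) * Real.cos (c * x)) x := by
    intro x _
    have h1 : HasDerivAt (fun x : ℝ => 2*a*x) (2*a) x := by
      simpa using (hasDerivAt_id x).const_mul (2*a)
    have h2 : HasDerivAt (fun x : ℝ => c*x) c x := by
      simpa using (hasDerivAt_id x).const_mul c
    have hexp := h1.exp
    have hcos := (h2.cos).const_mul (2*a)
    have hsin := (h2.sin).const_mul c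
    have := ((hexp.mul (hcos.add hsin)).div_const (4*a^2+c^2))
    refine this.congr_deriv ?_
    rw [show 2 * x * a = 2 * a * x by ring, div_eq_iff hD]
    simp only [Pi.add_apply]
    ring
  rw [intervalIntegral.integral_eq_sub_of_hasDerivAt key (by
    apply Continuous.intervalIntegrable; continuity)]
  simp [Real.exp_zero]
  field_simp

/-- Lemma 3.5: computation of `I₁` and `I₂` for even `k`. -/
theorem statement7 (k : ℕ) (hk : 1 ≤ k) (hke : Even k) (z : ℝ) (hz : 0 ≤ z) :
    I1 k z = I2 k z ∧
    I1 k z = (Lam1 k z).re / Real.sqrt (z ^ 2 + ((k : ℝ) * Real.pi) ^ 4 / 4) * Pk k z := by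
  set c : ℝ := (k : ℝ) * Real.pi with hcdef
  have hcpos : 0 < c := by
    apply mul_pos _ Real.pi_pos
    exact_mod_cast Nat.lt_of_lt_of_le Nat.zero_lt_one hk
  set a : ℝ := (Lam1 k z).re with hadef
  set b : ℝ := (Lam1 k z).im with hbdef
  set w : ℂ := Complex.I * ((z : ℂ) + Complex.I * ((k : ℝ) * Real.pi) ^ 2 / 2) with hwdef
  have hwc : w = Complex.I * ((z:ℂ) + Complex.I * ((c^2 : ℝ) : ℂ)/2) := by
    rw [hwdef, hcdef]
    push_cast
    ring
  have hwre : w.re = -c^2/2 := by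
    rw [hwc]
    simp [pow_two, Complex.mul_re, Complex.mul_im, Complex.div_re, Complex.div_im]
    ring
  have hwim : w.im = z := by
    rw [hwc]
    simp [pow_two, Complex.mul_re, Complex.mul_im, Complex.div_re, Complex.div_im]
  have hw : w ≠ 0 := by
    intro h
    rw [h] at hwre
    simp at hwre
    nlinarith
  have hsq : (Lam1 k z) ^ 2 = w := by
    rw [Lam1, lam1, sq, ← Complex.cpow_add _ _ hw]
    norm_num
  have h1 : a^2 - b^2 = -c^2/2 := by
    have := congrArg Complex.re hsq
    rw [sq, Complex.mul_re, hwre] at this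
    rw [← hadef, ← hbdef] at this
    nlinarith [this]
  have h2 : a^2 + b^2 = Real.sqrt (z^2 + c^4/4) := by
    have habs : ‖Lam1 k z‖ ^ 2 = ‖w‖ := by
      rw [← norm_pow, hsq]
    rw [Complex.sq_norm, Complex.normSq_apply, ← hadef, ← hbdef] at habs
    rw [show a^2 + b^2 = a*a + b*b by ring, habs, Complex.norm_def,
      Complex.normSq_apply, hwre, hwim]
    congr 1
    ring
  have hs : Real.sqrt (z^2 + c^4/4) = 2*a^2 + c^2/2 := by linarith
  have hcos : Real.cos c = 1 := by
    obtain ⟨m, hm⟩ := hke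
    have : c = (m : ℝ) * (2 * Real.pi) := by rw [hcdef, hm]; push_cast; ring
    rw [this, Real.cos_nat_mul_two_pi]
  have hsin : Real.sin c = 0 := by
    rw [hcdef]
    exact Real.sin_nat_mul_pi k
  have hre2 : (Lam2 k z).re = -a := by simp [Lam2, hadef]
  have int1 : (∫ x in (0:ℝ)..1, Real.exp (2 * x * (Lam1 k z).re) * Real.cos ((k : ℝ) * Real.pi * x))
      = (Real.exp (2*a) * (2*a) - 2*a) / (4*a^2 + c^2) := by
    rw [← hadef, ← hcdef, integral_exp_cos a c hcpos.ne', hcos, hsin]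
    ring_nf
  have int2 : (∫ x in (0:ℝ)..1, Real.exp (2 * x * (Lam2 k z).re) * Real.cos ((k : ℝ) * Real.pi * x))
      = (Real.exp (2*(-a)) * (2*(-a)) - 2*(-a)) / (4*a^2 + c^2) := by
    rw [hre2, ← hcdef, integral_exp_cos (-a) c hcpos.ne', hcos, hsin]
    ring_nf
  have habs2 : ‖Complex.exp (Lam1 k z) - 1‖ ^ 2
      = Real.exp (2*a) * ‖Complex.exp (Lam2 k z) - 1‖ ^ 2 := by
    have hfac : Complex.exp (Lam1 k z) - 1
        = -(Complex.exp (Lam1 k z)) * (Complex.exp (Lam2 k z) - 1) := by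
      rw [Lam2, Complex.exp_neg]
      field_simp
      ring
    rw [hfac]
    rw [norm_mul, norm_neg, Complex.norm_exp, mul_pow, ← hadef,
      ← Real.exp_nat_mul]
    norm_num [mul_comm]
  have hD : (0:ℝ) < 4*a^2 + c^2 := by positivity
  constructor
  · rw [I1, I2, int1, int2, habs2]
    have hexp : Real.exp (2*(-a)) = (Real.exp (2*a))⁻¹ := by
      rw [← Real.exp_neg]; ring_nf
    rw [hexp]
    field_simp [Real.exp_ne_zero, hD.ne']
    ring
  · rw [I1, int1, Pk, ← hadef, hs]
    have h4 : 4*a^2 + c^2 = 2*(2*a^2 + c^2/2) := by ring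
    rw [h4]
    have : (0:ℝ) < 2*a^2 + c^2/2 := by positivity
    field_simp
end
end

section
/- Let k ∈ ℕ* be even and let z ≥ 0. Then I₃(z) = −(2 Im(Λ_{1,k}(z)) / √(z² + (kπ)⁴/4)) · Q_k(z), where I₃(z) = 2 Re{ (e^{Λ_{2,k}(z)} − 1)(1 − e^{conj(Λ_{1,k}(z))}) ∫₀¹ e^{(Λ_{1,k}(z) + conj(Λ_{2,k}(z)))x} cos(kπx) dx }. -/
open MeasureTheory Set

noncomputable section

/-- `Q_k(z) = Im{(e^{Λ_{2,k}} - 1)(e^{conj Λ_{1,k}} - 1)(e^{2i Im Λ_{1,k}} - 1)}`. -/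
def Qk (k : ℕ) (z : ℝ) : ℝ :=
  ((Complex.exp (Lam2 k z) - 1) * (Complex.exp (starRingEnd ℂ (Lam1 k z)) - 1)
    * (Complex.exp (2 * Complex.I * ((Lam1 k z).im : ℂ)) - 1)).im

/-- `I₃(z)`. -/
def I3 (k : ℕ) (z : ℝ) : ℝ :=
  2 * ((Complex.exp (Lam2 k z) - 1) * (1 - Complex.exp (starRingEnd ℂ (Lam1 k z)))
    * ∫ x in (0:ℝ)..1,
        Complex.exp ((Lam1 k z + starRingEnd ℂ (Lam2 k z)) * (x : ℂ))
          * ((Real.cos ((k : ℝ) * Real.pi * x) : ℝ) : ℂ)).re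

set_option maxHeartbeats 1000000 in
/-- Lemma 3.6: computation of `I₃` for even `k`. -/
theorem statement8 (k : ℕ) (hk : 1 ≤ k) (hke : Even k) (z : ℝ) (hz : 0 ≤ z) :
    I3 k z = -(2 * (Lam1 k z).im / Real.sqrt (z ^ 2 + ((k : ℝ) * Real.pi) ^ 4 / 4)) * Qk k z := by
  have hKpos : 0 < (k : ℝ) * Real.pi := by
    have : (0:ℝ) < (k:ℝ) := by exact_mod_cast hk
    positivity
  set K : ℝ := (k : ℝ) * Real.pi with hK
  set W : ℂ := (z : ℂ) + Complex.I * ((k : ℝ) * Real.pi) ^ 2 / 2 with hW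
  have hWre : W.re = z := by
    simp [hW, pow_two, Complex.mul_re, Complex.mul_im, Complex.div_re, Complex.add_re,
      Complex.normSq_apply]
  have hWim : W.im = K ^ 2 / 2 := by
    simp [hW, pow_two, Complex.mul_re, Complex.mul_im, Complex.div_im, Complex.add_im,
      Complex.normSq_apply, hK]
  set L := Lam1 k z with hL
  set a := L.re with ha
  set b := L.im with hb
  set R : ℝ := Real.sqrt (z ^ 2 + K ^ 4 / 4) with hR
  have hRpos : 0 < R := Real.sqrt_pos.2 (by positivity)
  have hwne : Complex.I * W ≠ 0 := by
    apply mul_ne_zero Complex.I_ne_zero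
    intro h
    rw [Complex.ext_iff] at h
    rw [hWim] at h
    simp at h
    nlinarith [h.2, hKpos]
  have hsq : L * L = Complex.I * W := by
    rw [hL, Lam1, lam1, ← hW, ← Complex.cpow_add _ _ hwne]
    norm_num
  have hre : a ^ 2 - b ^ 2 = -(K ^ 2 / 2) := by
    have h := congrArg Complex.re hsq
    simp only [Complex.mul_re, Complex.I_re, Complex.I_im] at h
    rw [hWim] at h
    rw [ha, hb]; nlinarith [h]
  have habs : a ^ 2 + b ^ 2 = R := by
    have h1 : ‖L‖ ^ 2 = ‖L * L‖ := by rw [norm_mul]; ring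
    have h2 : ‖L * L‖ = R := by
      rw [hsq, norm_mul, Complex.norm_I, one_mul, Complex.norm_def, Complex.normSq_apply,
        hWre, hWim, hR]
      congr 1
      ring
    have h3 : ‖L‖ ^ 2 = a ^ 2 + b ^ 2 := by
      rw [Complex.sq_norm, Complex.normSq_apply]; ring
    rw [← h3, h1, h2]
  have hb2 : 4 * b ^ 2 - K ^ 2 = 2 * R := by nlinarith [hre, habs]
  have hbig : K ^ 2 < 4 * b ^ 2 := by nlinarith [hRpos]
  have hc1 : (Complex.I * (2 * (b:ℂ) + (K:ℂ))) ≠ 0 := by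
    apply mul_ne_zero Complex.I_ne_zero
    intro h
    rw [Complex.ext_iff] at h
    push_cast at h
    simp at h
    nlinarith [h, hbig, hKpos]
  have hc2 : (Complex.I * (2 * (b:ℂ) - (K:ℂ))) ≠ 0 := by
    apply mul_ne_zero Complex.I_ne_zero
    intro h
    rw [Complex.ext_iff] at h
    push_cast at h
    simp [sub_eq_zero] at h
    nlinarith [h, hbig, hKpos]
  have hek : Complex.exp (Complex.I * (K:ℂ)) = 1 := by
    obtain ⟨m, hm⟩ := hke
    have h : (K : ℂ) = (m : ℤ) * (2 * Real.pi) := by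
      rw [hK]; push_cast [hm]; ring
    rw [h, show Complex.I * ((m:ℤ) * (2 * (Real.pi:ℂ))) = (m:ℤ) * (2 * (Real.pi:ℂ) * Complex.I) by ring]
    exact Complex.exp_int_mul_two_pi_mul_I (m : ℤ)
  have hmu : L + starRingEnd ℂ (Lam2 k z) = 2 * Complex.I * (b:ℂ) := by
    have h : Lam2 k z = -L := by rw [Lam2, hL]
    rw [h, map_neg, ← sub_eq_add_neg, Complex.sub_conj, ← hb]
    push_cast; ring
  have hint : (∫ x in (0:ℝ)..1,
        Complex.exp ((L + starRingEnd ℂ (Lam2 k z)) * (x : ℂ))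
          * ((Real.cos (K * x) : ℝ) : ℂ))
      = -(Complex.I * (b:ℂ) * (Complex.exp (2 * Complex.I * (b:ℂ)) - 1)) / (R:ℂ) := by
    have heq : ∀ x : ℝ, Complex.exp ((L + starRingEnd ℂ (Lam2 k z)) * (x : ℂ))
          * ((Real.cos (K * x) : ℝ) : ℂ)
        = (Complex.exp ((Complex.I * (2 * (b:ℂ) + (K:ℂ))) * x)
          + Complex.exp ((Complex.I * (2 * (b:ℂ) - (K:ℂ))) * x)) / 2 := by
      intro x
      rw [hmu, Complex.ofReal_cos, Complex.cos]
      rw [show ((Complex.I * (2 * (b:ℂ) + (K:ℂ))) * x) = 2 * Complex.I * (b:ℂ) * x + (K:ℂ)*x*Complex.I by push_cast; ring,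
          show ((Complex.I * (2 * (b:ℂ) - (K:ℂ))) * x) = 2 * Complex.I * (b:ℂ) * x + -((K:ℂ)*x)*Complex.I by push_cast; ring,
          Complex.exp_add, Complex.exp_add]
      push_cast
      ring
    have hRC : (R : ℂ) ≠ 0 := by exact_mod_cast hRpos.ne'
    rw [intervalIntegral.integral_congr (fun x _ => heq x)]
    rw [intervalIntegral.integral_div,
      intervalIntegral.integral_add
        (Continuous.intervalIntegrable (by fun_prop) _ _)
        (Continuous.intervalIntegrable (by fun_prop) _ _),
      integral_exp_mul_complex hc1,
      integral_exp_mul_complex hc2]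
    have e1 : Complex.exp (Complex.I * (2 * (b:ℂ) + (K:ℂ)) * 1)
        = Complex.exp (2 * Complex.I * (b:ℂ)) := by
      rw [show Complex.I * (2 * (b:ℂ) + (K:ℂ)) * 1 = 2 * Complex.I * (b:ℂ) + Complex.I * (K:ℂ) by ring,
        Complex.exp_add, hek, mul_one]
    have e2 : Complex.exp (Complex.I * (2 * (b:ℂ) - (K:ℂ)) * 1)
        = Complex.exp (2 * Complex.I * (b:ℂ)) * (Complex.exp (Complex.I * (K:ℂ)))⁻¹ := by
      rw [← Complex.exp_neg, ← Complex.exp_add]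
      congr 1
      ring
    push_cast
    rw [e1, e2, hek]
    simp only [mul_zero, Complex.exp_zero, inv_one, mul_one]
    have hbb : ((4:ℂ) * (b:ℂ)^2 - (K:ℂ)^2) = 2 * (R:ℂ) := by exact_mod_cast hb2
    rw [div_add_div _ _ hc1 hc2, div_div,
      div_eq_div_iff (mul_ne_zero (mul_ne_zero hc1 hc2) two_ne_zero) hRC]
    linear_combination (-2 * Complex.I * (b:ℂ) * (Complex.exp (2 * Complex.I * (b:ℂ)) - 1)) * hbb
      + (Complex.I * (8 * (b:ℂ)^3 - 2 * (b:ℂ) * (K:ℂ)^2) * (Complex.exp (2 * Complex.I * (b:ℂ)) - 1)) * Complex.I_sq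
  -- final assembly
  rw [hK] at hint
  rw [I3, ← hL, hint, Qk, ← hL, ← hb]
  have hRC : (R : ℂ) ≠ 0 := by exact_mod_cast hRpos.ne'
  have key : (Complex.exp (Lam2 k z) - 1) * (1 - Complex.exp (starRingEnd ℂ L)) *
        (-(Complex.I * (b:ℂ) * (Complex.exp (2 * Complex.I * (b:ℂ)) - 1)) / (R:ℂ))
      = ((b / R : ℝ) : ℂ) * (Complex.I * ((Complex.exp (Lam2 k z) - 1) *
        (Complex.exp (starRingEnd ℂ L) - 1) * (Complex.exp (2 * Complex.I * (b:ℂ)) - 1))) := by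
    push_cast
    field_simp
    ring
  rw [key, Complex.re_ofReal_mul, Complex.I_mul_re]
  field_simp
end
end

section
/- Let k ∈ ℕ* be even and let z ≥ 0. Then −(1/2)(z² + (kπ)⁴/4) I₄(z) = −(1/2)(z² + (kπ)⁴/4) I₅(z) = P_k(z)·( ((kπ)²/2)·Re(Λ_{1,k}(z)) + z·Im(Λ_{1,k}(z)) ) − Q_k(z)·( z·Re(Λ_{1,k}(z)) − ((kπ)²/2)·Im(Λ_{1,k}(z)) ), where I₄(z) = 2 Re{ (e^{Λ_{2,k}(z)} − 1)(e^{conj(Λ_{1,k}(z))} − e^{conj(Λ_{2,k}(z))}) ∫₀¹ e^{Λ_{1,k}(z)x} cos(kπx) dx } and I₅(z) = 2 Re{ (1 − e^{Λ_{1,k}(z)})(e^{conj(Λ_{1,k}(z))} − e^{conj(Λ_{2,k}(z))}) ∫₀¹ e^{Λ_{2,k}(z)x} cos(kπx) dx }. -/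
open MeasureTheory Set

noncomputable section

/-- `I₄(z)`. -/
def I4 (k : ℕ) (z : ℝ) : ℝ :=
  2 * ((Complex.exp (Lam2 k z) - 1)
    * (Complex.exp (starRingEnd ℂ (Lam1 k z)) - Complex.exp (starRingEnd ℂ (Lam2 k z)))
    * ∫ x in (0:ℝ)..1,
        Complex.exp (Lam1 k z * (x : ℂ)) * ((Real.cos ((k : ℝ) * Real.pi * x) : ℝ) : ℂ)).re

/-- `I₅(z)`. -/
def I5 (k : ℕ) (z : ℝ) : ℝ :=
  2 * ((1 - Complex.exp (Lam1 k z))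
    * (Complex.exp (starRingEnd ℂ (Lam1 k z)) - Complex.exp (starRingEnd ℂ (Lam2 k z)))
    * ∫ x in (0:ℝ)..1,
        Complex.exp (Lam2 k z * (x : ℂ)) * ((Real.cos ((k : ℝ) * Real.pi * x) : ℝ) : ℂ)).re

lemma exp_I_even (k : ℕ) (hke : Even k) : Complex.exp (Complex.I * ((k:ℝ) * Real.pi)) = 1 := by
  obtain ⟨m, hm⟩ := hke
  have : Complex.I * ((k:ℝ) * Real.pi) = (m : ℤ) * (2 * (Real.pi:ℂ) * Complex.I) := by
    push_cast [hm]; ring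
  rw [this, Complex.exp_int_mul_two_pi_mul_I]

lemma integral_exp_cos_s9 (c : ℂ) (k : ℕ) (hke : Even k)
    (h1 : c + Complex.I * ((k:ℝ) * Real.pi) ≠ 0)
    (h2 : c - Complex.I * ((k:ℝ) * Real.pi) ≠ 0) :
    (∫ x in (0:ℝ)..1, Complex.exp (c * (x:ℂ)) * ((Real.cos ((k:ℝ) * Real.pi * x) : ℝ) : ℂ))
      = c * (Complex.exp c - 1) / (c ^ 2 + (((k:ℝ) * Real.pi : ℝ) : ℂ) ^ 2) := by
  set d : ℂ := Complex.I * ((k:ℝ) * Real.pi) with hd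
  have heq : ∀ x : ℝ, Complex.exp (c * (x:ℂ)) * ((Real.cos ((k:ℝ) * Real.pi * x) : ℝ) : ℂ)
      = (Complex.exp ((c + d) * x) + Complex.exp ((c - d) * x)) / 2 := by
    intro x
    rw [Complex.ofReal_cos]
    show Complex.exp (c * (x:ℂ)) *
      ((Complex.exp ((((k:ℝ) * Real.pi * x : ℝ):ℂ) * Complex.I)
        + Complex.exp (-(((k:ℝ) * Real.pi * x : ℝ):ℂ) * Complex.I)) / 2) = _
    rw [mul_div_assoc', mul_add, ← Complex.exp_add, ← Complex.exp_add,
      show c * (x:ℂ) + (((k:ℝ) * Real.pi * x : ℝ):ℂ) * Complex.I = (c + d) * x by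
        rw [hd]; push_cast; ring,
      show c * (x:ℂ) + -(((k:ℝ) * Real.pi * x : ℝ):ℂ) * Complex.I = (c - d) * x by
        rw [hd]; push_cast; ring]
  rw [intervalIntegral.integral_congr (g := fun x : ℝ =>
    (Complex.exp ((c + d) * x) + Complex.exp ((c - d) * x)) / 2) (fun x _ => heq x)]
  have i1 : IntervalIntegrable (fun x : ℝ => Complex.exp ((c + d) * x)) MeasureTheory.volume 0 1 :=
    (Continuous.cexp (by continuity)).intervalIntegrable 0 1
  have i2 : IntervalIntegrable (fun x : ℝ => Complex.exp ((c - d) * x)) MeasureTheory.volume 0 1 :=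
    (Continuous.cexp (by continuity)).intervalIntegrable 0 1
  rw [intervalIntegral.integral_div, intervalIntegral.integral_add i1 i2,
    integral_exp_mul_complex h1, integral_exp_mul_complex h2]
  have he : Complex.exp d = 1 := exp_I_even k hke
  have hd2 : d ^ 2 = -((((k:ℝ) * Real.pi : ℝ):ℂ)) ^ 2 := by
    rw [hd]; push_cast; ring_nf; rw [Complex.I_sq]; ring
  have hden : c ^ 2 + (((k:ℝ) * Real.pi : ℝ):ℂ) ^ 2 = (c + d) * (c - d) := by
    rw [← neg_neg ((((k:ℝ) * Real.pi : ℝ):ℂ) ^ 2), ← hd2]; ring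
  rw [hden]
  push_cast
  rw [mul_one, mul_one, mul_zero, mul_zero, Complex.exp_zero, Complex.exp_add,
    Complex.exp_sub, he, mul_one, div_one]
  field_simp
  ring

lemma Wident (E F : ℂ) (hE : E ≠ 0) (hF : F ≠ 0) :
    (E⁻¹ - 1) * (E - 1) * (F - F⁻¹)
      = -((E⁻¹ - 1) * (F⁻¹ - 1) * (E * F - 1))
        + ((E⁻¹ - 1) * (F - 1) * (E * F⁻¹ - 1)
            - (F⁻¹ - 1) * (E - 1) * (F * E⁻¹ - 1)) / 2 := by
  linear_combination (-F/2 - F⁻¹/2 + F * F⁻¹) * mul_inv_cancel₀ hE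
    + (-E/2 - E⁻¹/2 + 1) * mul_inv_cancel₀ hF

set_option maxHeartbeats 1000000 in
/-- Lemma 3.7: computation of `I₄` and `I₅` for even `k`. -/
theorem statement9 (k : ℕ) (hk : 1 ≤ k) (hke : Even k) (z : ℝ) (hz : 0 ≤ z) :
    -(1/2) * (z ^ 2 + ((k : ℝ) * Real.pi) ^ 4 / 4) * I4 k z
      = -(1/2) * (z ^ 2 + ((k : ℝ) * Real.pi) ^ 4 / 4) * I5 k z ∧
    -(1/2) * (z ^ 2 + ((k : ℝ) * Real.pi) ^ 4 / 4) * I4 k z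
      = Pk k z * (((k : ℝ) * Real.pi) ^ 2 / 2 * (Lam1 k z).re + z * (Lam1 k z).im)
        - Qk k z * (z * (Lam1 k z).re - ((k : ℝ) * Real.pi) ^ 2 / 2 * (Lam1 k z).im) := by
  have hπ := Real.pi_pos
  have hk0 : (0:ℝ) < (k:ℝ) := by exact_mod_cast hk
  have hK0 : (0:ℝ) < (k:ℝ) * Real.pi := by positivity
  set L : ℂ := Lam1 k z with hLdef
  -- square of L
  have hL2 : L ^ 2 = Complex.I * (z:ℂ) - (((k:ℝ):ℂ) * (Real.pi:ℂ)) ^ 2 / 2 := by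
    have h0 : L ^ 2
        = Complex.I * ((z : ℂ) + Complex.I * (((k:ℝ):ℂ) * (Real.pi:ℂ)) ^ 2 / 2) := by
      rw [hLdef]
      unfold Lam1 lam1
      rw [show ((1:ℂ)/2) = (((2:ℕ):ℂ))⁻¹ by norm_num]
      exact Complex.cpow_nat_inv_pow _ two_ne_zero
    rw [h0]
    linear_combination ((((k:ℝ):ℂ) * (Real.pi:ℂ)) ^ 2 / 2) * Complex.I_sq
  set Kc : ℂ := ((k:ℝ):ℂ) * (Real.pi:ℂ) with hKc
  set μ : ℂ := Complex.I * (z:ℂ) + Kc ^ 2 / 2 with hμ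
  have hμeq : L ^ 2 + Kc ^ 2 = μ := by rw [hL2, hμ]; ring
  have hKcast : Kc = (((k:ℝ) * Real.pi : ℝ) : ℂ) := by rw [hKc]; push_cast; ring
  have hμ2 : μ = Complex.I * (z:ℂ) + ((((k:ℝ) * Real.pi) ^ 2 / 2 : ℝ) : ℂ) := by
    rw [hμ, hKcast]; push_cast; ring
  have hμre : μ.re = ((k:ℝ) * Real.pi) ^ 2 / 2 := by
    rw [hμ2, Complex.add_re, Complex.ofReal_re, Complex.mul_re]; simp
  have hμne : μ ≠ 0 := fun h => by
    rw [h] at hμre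
    simp at hμre
    nlinarith
  have hfac : (L + Complex.I * Kc) * (L - Complex.I * Kc) = μ := by
    rw [← hμeq]
    linear_combination (-(Kc ^ 2)) * Complex.I_sq
  have h1 : L + Complex.I * Kc ≠ 0 := fun h => hμne (by rw [← hfac, h, zero_mul])
  have h2 : L - Complex.I * Kc ≠ 0 := fun h => hμne (by rw [← hfac, h, mul_zero])
  have h1' : -L + Complex.I * Kc ≠ 0 := fun h => h2 (by linear_combination -h)
  have h2' : -L - Complex.I * Kc ≠ 0 := fun h => h1 (by linear_combination -h)
  set E : ℂ := Complex.exp L with hE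
  set F : ℂ := Complex.exp ((starRingEnd ℂ) L) with hF
  have hEne : E ≠ 0 := Complex.exp_ne_zero _
  have hFne : F ≠ 0 := Complex.exp_ne_zero _
  have h1c : L + Complex.I * (((k:ℝ) * Real.pi : ℝ) : ℂ) ≠ 0 := by rw [← hKcast]; exact h1
  have h2c : L - Complex.I * (((k:ℝ) * Real.pi : ℝ) : ℂ) ≠ 0 := by rw [← hKcast]; exact h2
  have h1c' : -L + Complex.I * (((k:ℝ) * Real.pi : ℝ) : ℂ) ≠ 0 := by rw [← hKcast]; exact h1'
  have h2c' : -L - Complex.I * (((k:ℝ) * Real.pi : ℝ) : ℂ) ≠ 0 := by rw [← hKcast]; exact h2'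
  have hI1 : (∫ x in (0:ℝ)..1, Complex.exp (L * (x:ℂ)) * ((Real.cos ((k:ℝ) * Real.pi * x) : ℝ) : ℂ))
      = L * (E - 1) / μ := by
    rw [integral_exp_cos_s9 L k hke h1 h2, ← hKcast, hμeq, hE]
  have hI2 : (∫ x in (0:ℝ)..1, Complex.exp (-L * (x:ℂ)) * ((Real.cos ((k:ℝ) * Real.pi * x) : ℝ) : ℂ))
      = -L * (E⁻¹ - 1) / μ := by
    rw [integral_exp_cos_s9 (-L) k hke h1' h2', ← hKcast,
      show (-L) ^ 2 = L ^ 2 by ring, hμeq, Complex.exp_neg, hE]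
  -- conjugation facts
  have hFE : F = (starRingEnd ℂ) E := by rw [hE, hF, Complex.exp_conj]
  have hEF : (starRingEnd ℂ) F = E := by rw [hFE, Complex.conj_conj]
  -- real quantities
  set P : ℝ := Pk k z with hP
  set Q : ℝ := Qk k z with hQ
  set a : ℝ := ((k:ℝ) * Real.pi) ^ 2 / 2 * L.re + z * L.im with ha
  set b : ℝ := z * L.re - ((k:ℝ) * Real.pi) ^ 2 / 2 * L.im with hb
  -- complex forms of P and Q
  have hPc : ((P:ℝ):ℂ) = (E⁻¹ - 1) * (F⁻¹ - 1) * (E * F - 1) := by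
    rw [hP]
    unfold Pk
    rw [← hLdef]
    unfold Lam2
    rw [← hLdef]
    rw [Complex.sq_norm, Complex.ofReal_mul, ← Complex.mul_conj, Complex.ofReal_sub,
      Complex.ofReal_exp, Complex.ofReal_one]
    rw [map_sub, map_one, ← Complex.exp_conj, map_neg,
      show ((2 * L.re : ℝ) : ℂ) = L + (starRingEnd ℂ) L from (Complex.add_conj L).symm,
      Complex.exp_add, Complex.exp_neg, Complex.exp_neg, ← hE, ← hF]
  have hQc : ((Q:ℝ):ℂ) * (2 * Complex.I)
      = (E⁻¹ - 1) * (F - 1) * (E * F⁻¹ - 1)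
        - (F⁻¹ - 1) * (E - 1) * (F * E⁻¹ - 1) := by
    rw [hQ]
    unfold Qk
    rw [← hLdef]
    unfold Lam2
    rw [← hLdef]
    set V : ℂ := (Complex.exp (-L) - 1) * (Complex.exp ((starRingEnd ℂ) L) - 1)
      * (Complex.exp (2 * Complex.I * ((L.im : ℝ):ℂ)) - 1) with hV
    have hsub : ((V.im : ℝ):ℂ) * (2 * Complex.I) = V - (starRingEnd ℂ) V := by
      rw [Complex.sub_conj]; push_cast; ring
    rw [hsub, hV]
    have hexp2 : Complex.exp (2 * Complex.I * ((L.im : ℝ):ℂ)) = E * F⁻¹ := by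
      rw [show 2 * Complex.I * ((L.im : ℝ):ℂ) = L - (starRingEnd ℂ) L by
        rw [Complex.sub_conj]; push_cast; ring, Complex.exp_sub, ← hE, ← hF, div_eq_mul_inv]
    rw [hexp2, Complex.exp_neg, ← hE, ← hF]
    simp only [map_mul, map_sub, map_one, map_inv₀]
    rw [← hFE, hEF]
  -- the coefficient
  set c0 : ℝ := z ^ 2 + ((k:ℝ) * Real.pi) ^ 4 / 4 with hc0
  set ν : ℂ := (((((k:ℝ) * Real.pi) ^ 2 / 2 : ℝ)) : ℂ) - Complex.I * (z:ℂ) with hν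
  have hc0c : ((c0 : ℝ):ℂ) = μ * ν := by
    rw [hc0, hμ, hν, hKcast]
    push_cast
    linear_combination ((z:ℂ)^2) * Complex.I_sq
  have hνL : ν * L = ((a:ℝ):ℂ) - ((b:ℝ):ℂ) * Complex.I := by
    rw [hν, ha, hb]
    apply Complex.ext <;> simp <;> ring
  -- the main complex identity
  have hQI : ((Q:ℝ):ℂ) * Complex.I
      = ((E⁻¹ - 1) * (F - 1) * (E * F⁻¹ - 1)
          - (F⁻¹ - 1) * (E - 1) * (F * E⁻¹ - 1)) / 2 := by
    linear_combination hQc / 2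
  have cancel : (-(c0:ℂ)) * ((E⁻¹ - 1) * (F - F⁻¹) * (L * (E - 1) / μ))
      = -(ν * L) * ((E⁻¹ - 1) * (E - 1) * (F - F⁻¹)) := by
    rw [hc0c]
    linear_combination (-(ν * (E⁻¹ - 1) * (F - F⁻¹) * L * (E - 1))) * mul_inv_cancel₀ hμne
  have key : (-(c0:ℂ)) * ((E⁻¹ - 1) * (F - F⁻¹) * (L * (E - 1) / μ))
      = (((a:ℝ):ℂ) - ((b:ℝ):ℂ) * Complex.I) * (((P:ℝ):ℂ) - ((Q:ℝ):ℂ) * Complex.I) := by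
    rw [cancel, ← hνL, hPc, hQI]
    linear_combination (-(ν * L)) * Wident E F hEne hFne
  -- real parts
  have hre : (((((a:ℝ):ℂ) - ((b:ℝ):ℂ) * Complex.I) * (((P:ℝ):ℂ) - ((Q:ℝ):ℂ) * Complex.I)).re)
      = P * a - Q * b := by
    simp [Complex.mul_re, Complex.sub_re, Complex.sub_im]
    ring
  have hre2 : ((-(c0:ℂ)) * ((E⁻¹ - 1) * (F - F⁻¹) * (L * (E - 1) / μ))).re
      = -c0 * ((E⁻¹ - 1) * (F - F⁻¹) * (L * (E - 1) / μ)).re := by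
    rw [show (-(c0:ℂ)) = ((-c0 : ℝ) : ℂ) by push_cast; ring, Complex.re_ofReal_mul]
  have main4 : -(1/2) * c0 * I4 k z = P * a - Q * b := by
    have hI4 : I4 k z = 2 * ((E⁻¹ - 1) * (F - F⁻¹) * (L * (E - 1) / μ)).re := by
      unfold I4
      rw [← hLdef]
      unfold Lam2
      rw [← hLdef, hI1, map_neg, Complex.exp_neg, Complex.exp_neg, ← hE, ← hF]
    rw [hI4, show -(1/2) * c0 * (2 * ((E⁻¹ - 1) * (F - F⁻¹) * (L * (E - 1) / μ)).re)
        = -c0 * ((E⁻¹ - 1) * (F - F⁻¹) * (L * (E - 1) / μ)).re by ring,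
      ← hre2, key, hre]
  have main5 : -(1/2) * c0 * I5 k z = P * a - Q * b := by
    have hI5 : I5 k z = 2 * ((1 - E) * (F - F⁻¹) * (-L * (E⁻¹ - 1) / μ)).re := by
      unfold I5
      rw [← hLdef]
      unfold Lam2
      rw [← hLdef, hI2, map_neg, Complex.exp_neg, ← hE, ← hF]
    have hBA : (1 - E) * (F - F⁻¹) * (-L * (E⁻¹ - 1) / μ)
        = (E⁻¹ - 1) * (F - F⁻¹) * (L * (E - 1) / μ) := by ring
    rw [hI5, hBA, show -(1/2) * c0 * (2 * ((E⁻¹ - 1) * (F - F⁻¹) * (L * (E - 1) / μ)).re)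
        = -c0 * ((E⁻¹ - 1) * (F - F⁻¹) * (L * (E - 1) / μ)).re by ring,
      ← hre2, key, hre]
  exact ⟨by rw [main4, main5], by rw [main4]⟩
end
end

section
/- Let k ∈ ℕ* and let z ≥ 0. Then: (i) P_k(z) = −e^{conj(Λ_{1,k}(z))} − e^{Λ_{1,k}(z)} + e^{2Re(Λ_{1,k}(z))} − e^{Λ_{2,k}(z) + conj(Λ_{2,k}(z))} + e^{Λ_{2,k}(z)} + e^{conj(Λ_{2,k}(z))}; (ii) P_k(z) = e^{2Re(Λ_{1,k}(z))} − e^{−2Re(Λ_{1,k}(z))} − 2 Re(e^{Λ_{1,k}(z)} − e^{−Λ_{1,k}(z)}); and (iii) P_k(z) ≥ e^{2Re(Λ_{1,k}(z))} − e^{−2Re(Λ_{1,k}(z))} − 2e^{Re(Λ_{1,k}(z))} + 2e^{−Re(Λ_{1,k}(z))}. -/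
open MeasureTheory Set

noncomputable section

lemma re_cpow_half_nonneg (a : ℂ) : 0 ≤ (a ^ ((1:ℂ)/2)).re := by
  by_cases ha : a = 0
  · simp [ha, Complex.zero_cpow (by norm_num : (1:ℂ)/2 ≠ 0)]
  · rw [Complex.cpow_def_of_ne_zero ha, Complex.exp_re]
    apply mul_nonneg (Real.exp_nonneg _)
    have him : (Complex.log a * ((1:ℂ)/2)).im = a.arg / 2 := by
      simp [Complex.mul_im, Complex.log_im]; ring
    rw [him]
    apply Real.cos_nonneg_of_mem_Icc
    constructor
    · linarith [Complex.neg_pi_lt_arg a, Real.pi_pos]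
    · linarith [Complex.arg_le_pi a]

/-- Lemma 3.8: identities and a lower bound for `P_k`. -/
theorem statement10 (k : ℕ) (hk : 1 ≤ k) (z : ℝ) (hz : 0 ≤ z) :
    ((Pk k z : ℂ) =
      -Complex.exp (starRingEnd ℂ (Lam1 k z)) - Complex.exp (Lam1 k z)
        + ((Real.exp (2 * (Lam1 k z).re) : ℝ) : ℂ)
        - Complex.exp (Lam2 k z + starRingEnd ℂ (Lam2 k z))
        + Complex.exp (Lam2 k z) + Complex.exp (starRingEnd ℂ (Lam2 k z))) ∧
    (Pk k z = Real.exp (2 * (Lam1 k z).re) - Real.exp (-(2 * (Lam1 k z).re))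
      - 2 * (Complex.exp (Lam1 k z) - Complex.exp (-Lam1 k z)).re) ∧
    (Pk k z ≥ Real.exp (2 * (Lam1 k z).re) - Real.exp (-(2 * (Lam1 k z).re))
      - 2 * Real.exp ((Lam1 k z).re) + 2 * Real.exp (-(Lam1 k z).re)) := by
  have hre : 0 ≤ (Lam1 k z).re := re_cpow_half_nonneg _
  set Λ := Lam1 k z with hΛ
  have hL2 : Lam2 k z = -Λ := rfl
  have hu0 : Complex.exp Λ ≠ 0 := Complex.exp_ne_zero _
  have hv0 : Complex.exp (starRingEnd ℂ Λ) ≠ 0 := Complex.exp_ne_zero _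
  have huv : ((Real.exp (2 * Λ.re) : ℝ) : ℂ)
      = Complex.exp Λ * Complex.exp (starRingEnd ℂ Λ) := by
    rw [Complex.ofReal_exp, ← Complex.exp_add]
    congr 1
    rw [Complex.add_conj]
  have hEL2 : Complex.exp (Lam2 k z) = (Complex.exp Λ)⁻¹ := by
    rw [hL2, Complex.exp_neg]
  have hEL2c : Complex.exp (starRingEnd ℂ (Lam2 k z))
      = (Complex.exp (starRingEnd ℂ Λ))⁻¹ := by
    rw [hL2, map_neg, Complex.exp_neg]
  have hEL2s : Complex.exp (Lam2 k z + starRingEnd ℂ (Lam2 k z))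
      = (Complex.exp Λ)⁻¹ * (Complex.exp (starRingEnd ℂ Λ))⁻¹ := by
    rw [Complex.exp_add, hEL2, hEL2c]
  have habs : ((‖Complex.exp (Lam2 k z) - 1‖ : ℝ) : ℂ) ^ 2
      = ((Complex.exp Λ)⁻¹ - 1) * ((Complex.exp (starRingEnd ℂ Λ))⁻¹ - 1) := by
    rw [← Complex.ofReal_pow, Complex.sq_norm, ← Complex.mul_conj, map_sub, map_one,
      ← Complex.exp_conj, hEL2, hEL2c]
  have hi : (Pk k z : ℂ) =
      -Complex.exp (starRingEnd ℂ Λ) - Complex.exp Λ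
        + ((Real.exp (2 * Λ.re) : ℝ) : ℂ)
        - Complex.exp (Lam2 k z + starRingEnd ℂ (Lam2 k z))
        + Complex.exp (Lam2 k z) + Complex.exp (starRingEnd ℂ (Lam2 k z)) := by
    rw [Pk, ← hΛ, Complex.ofReal_mul, Complex.ofReal_pow, Complex.ofReal_sub,
      Complex.ofReal_one, habs, huv, hEL2, hEL2c, hEL2s]
    field_simp
    ring
  refine ⟨hi, ?_, ?_⟩ <;>
  · have h2 : Pk k z = (-Complex.exp (starRingEnd ℂ Λ) - Complex.exp Λ
        + ((Real.exp (2 * Λ.re) : ℝ) : ℂ)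
        - Complex.exp (Lam2 k z + starRingEnd ℂ (Lam2 k z))
        + Complex.exp (Lam2 k z) + Complex.exp (starRingEnd ℂ (Lam2 k z))).re := by
      rw [← hi, Complex.ofReal_re]
    have hs : Complex.exp (Lam2 k z + starRingEnd ℂ (Lam2 k z))
        = ((Real.exp (-(2 * Λ.re)) : ℝ) : ℂ) := by
      rw [hEL2s, ← mul_inv, ← huv, ← Complex.ofReal_inv, ← Real.exp_neg]
    have hcre : (Complex.exp (starRingEnd ℂ Λ)).re = (Complex.exp Λ).re := by
      rw [Complex.exp_conj, Complex.conj_re]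
    have hcre2 : (Complex.exp (starRingEnd ℂ (Lam2 k z))).re
        = (Complex.exp (-Λ)).re := by
      rw [Complex.exp_conj, Complex.conj_re, hL2]
    have hcre3 : (Complex.exp (starRingEnd ℂ (-Λ))).re = (Complex.exp (-Λ)).re := by
      rw [Complex.exp_conj, Complex.conj_re]
    have hii : Pk k z = Real.exp (2 * Λ.re) - Real.exp (-(2 * Λ.re))
        - 2 * (Complex.exp Λ - Complex.exp (-Λ)).re := by
      rw [h2, hs]
      simp only [Complex.sub_re, Complex.add_re, Complex.neg_re, Complex.ofReal_re,
        hcre, hcre2, hcre3, hL2]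
      ring
    first
    | exact hii
    | · rw [hii]
        have hd : (Complex.exp Λ - Complex.exp (-Λ)).re
            = (Real.exp Λ.re - Real.exp (-Λ.re)) * Real.cos Λ.im := by
          rw [Complex.sub_re, Complex.exp_re, Complex.exp_re, Complex.neg_re,
            Complex.neg_im, Real.cos_neg]
          ring
        have hexp : Real.exp (-Λ.re) ≤ Real.exp Λ.re :=
          Real.exp_le_exp.mpr (by linarith)
        nlinarith [Real.cos_le_one Λ.im, Real.neg_one_le_cos Λ.im, hd]
end
end

section
/- Let k ∈ ℕ* and let z ≥ 0. Then: (i) (e^{Λ_{2,k}(z)} − 1)(e^{conj(Λ_{1,k}(z))} − 1)(e^{2i·Im(Λ_{1,k}(z))} − 1) = −e^{conj(Λ_{2,k}(z))} − e^{Λ_{1,k}(z)} + e^{Λ_{1,k}(z) + conj(Λ_{2,k}(z))} − e^{Λ_{2,k}(z) + conj(Λ_{1,k}(z))} + e^{Λ_{2,k}(z)} + e^{conj(Λ_{1,k}(z))}; and consequently (ii) Q_k(z) = −2 ( e^{Re(Λ_{1,k}(z))} + e^{−Re(Λ_{1,k}(z))} − 2 cos(Im(Λ_{1,k}(z))) )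 · sin(Im(Λ_{1,k}(z))). -/
open MeasureTheory Set

noncomputable section

/-- Lemma 3.9: identities for `Q_k`. -/
theorem statement11 (k : ℕ) (hk : 1 ≤ k) (z : ℝ) (hz : 0 ≤ z) :
    ((Complex.exp (Lam2 k z) - 1) * (Complex.exp (starRingEnd ℂ (Lam1 k z)) - 1)
        * (Complex.exp (2 * Complex.I * ((Lam1 k z).im : ℂ)) - 1)
      = -Complex.exp (starRingEnd ℂ (Lam2 k z)) - Complex.exp (Lam1 k z)
        + Complex.exp (Lam1 k z + starRingEnd ℂ (Lam2 k z))
        - Complex.exp (Lam2 k z + starRingEnd ℂ (Lam1 k z))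
        + Complex.exp (Lam2 k z) + Complex.exp (starRingEnd ℂ (Lam1 k z))) ∧
    (Qk k z = -2 * (Real.exp ((Lam1 k z).re) + Real.exp (-(Lam1 k z).re)
        - 2 * Real.cos ((Lam1 k z).im)) * Real.sin ((Lam1 k z).im)) := by

  have hkey : 2 * Complex.I * (((Lam1 k z).im : ℝ) : ℂ)
      = Lam1 k z - starRingEnd ℂ (Lam1 k z) := by
    rw [Complex.sub_conj]; push_cast; ring
  have h1 : (Complex.exp (Lam2 k z) - 1) * (Complex.exp (starRingEnd ℂ (Lam1 k z)) - 1)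
        * (Complex.exp (2 * Complex.I * ((Lam1 k z).im : ℂ)) - 1)
      = -Complex.exp (starRingEnd ℂ (Lam2 k z)) - Complex.exp (Lam1 k z)
        + Complex.exp (Lam1 k z + starRingEnd ℂ (Lam2 k z))
        - Complex.exp (Lam2 k z + starRingEnd ℂ (Lam1 k z))
        + Complex.exp (Lam2 k z) + Complex.exp (starRingEnd ℂ (Lam1 k z)) := by
    rw [hkey]
    simp only [Lam2, map_neg, Complex.exp_sub, Complex.exp_add, Complex.exp_neg]
    have h := Complex.exp_ne_zero (Lam1 k z)
    have h' := Complex.exp_ne_zero (starRingEnd ℂ (Lam1 k z))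
    field_simp
    ring
  refine ⟨h1, ?_⟩
  rw [Qk, h1]
  simp only [Lam2, map_neg, Complex.sub_im, Complex.add_im, Complex.neg_im, Complex.neg_re,
    Complex.exp_im, Complex.exp_re, Complex.conj_re, Complex.conj_im, Real.sin_neg,
    Real.cos_neg, neg_neg, add_neg_cancel, Real.exp_zero, neg_add_cancel,
    Complex.sub_re, Complex.sub_im, Complex.add_re, sub_self]
  rw [show -(Lam1 k z).im + -(Lam1 k z).im = -(2 * (Lam1 k z).im) by ring,
    show (Lam1 k z).im + (Lam1 k z).im = 2 * (Lam1 k z).im by ring,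
    Real.sin_neg, Real.sin_two_mul]
  ring
end
end

section
/- Let k ∈ ℕ* be even. Then the function Ω_k : ℝ → ℝ is continuous and even, i.e., Ω_k(z) = Ω_k(−z) for every z ∈ ℝ. -/
open MeasureTheory Set

noncomputable section

/-- `Θ_k(z)`. -/
def Theta (k : ℕ) (z : ℝ) : ℝ :=
  ∫ x in (0:ℝ)..1,
    ‖(Complex.exp (Lam2 k z) - 1) * Complex.exp (Lam1 k z * (x : ℂ))
      + (1 - Complex.exp (Lam1 k z)) * Complex.exp (Lam2 k z * (x : ℂ))
      + Complex.exp (Lam1 k z) - Complex.exp (Lam2 k z)‖ ^ 2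
    * Real.cos ((k : ℝ) * Real.pi * x)

/-- `Ω_k(z) = Θ_k(z) / ((z² + (kπ)⁴/4) |e^{Λ_{1,k}(z)} - e^{Λ_{2,k}(z)}|²)`. -/
def Omega (k : ℕ) (z : ℝ) : ℝ :=
  Theta k z / ((z ^ 2 + ((k : ℝ) * Real.pi) ^ 4 / 4)
    * ‖Complex.exp (Lam1 k z) - Complex.exp (Lam2 k z)‖ ^ 2)

/- ### Auxiliary definitions -/

def Aexp (l : ℂ) (x : ℝ) : ℂ :=
  (Complex.exp (-l) - 1) * Complex.exp (l * (x : ℂ))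
    + (1 - Complex.exp l) * Complex.exp (-l * (x : ℂ))
    + Complex.exp l - Complex.exp (-l)

def Ffun (k : ℕ) (l : ℂ) : ℝ :=
  ∫ x in (0:ℝ)..1, ‖Aexp l x‖ ^ 2 * Real.cos ((k : ℝ) * Real.pi * x)

def Dfun (l : ℂ) : ℝ := ‖Complex.exp l - Complex.exp (-l)‖ ^ 2

def Psi (k : ℕ) (l : ℂ) (z : ℝ) : ℝ :=
  Ffun k l / ((z ^ 2 + ((k : ℝ) * Real.pi) ^ 4 / 4) * Dfun l)

def base (k : ℕ) (z : ℝ) : ℂ :=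
  Complex.I * ((z : ℂ) + Complex.I * ((k : ℝ) * Real.pi) ^ 2 / 2)

lemma Lam1_eq (k : ℕ) (z : ℝ) : Lam1 k z = base k z ^ ((1:ℂ)/2) := rfl

lemma Omega_eq (k : ℕ) (z : ℝ) : Omega k z = Psi k (Lam1 k z) z := rfl

lemma base_eq (k : ℕ) (z : ℝ) :
    base k z = ((-(((k : ℝ) * Real.pi) ^ 2 / 2) : ℝ) : ℂ) + (z : ℝ) * Complex.I := by
  simp only [base]
  push_cast
  ring_nf
  rw [Complex.I_sq]
  ring

lemma base_re (k : ℕ) (z : ℝ) : (base k z).re = -(((k : ℝ) * Real.pi) ^ 2 / 2) := by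
  rw [base_eq]; simp [← Complex.ofReal_mul, ← Complex.ofReal_pow]

lemma base_im (k : ℕ) (z : ℝ) : (base k z).im = z := by
  rw [base_eq]; simp [← Complex.ofReal_mul, ← Complex.ofReal_pow]

lemma pi_sq_pos (k : ℕ) (hk : 1 ≤ k) : 0 < ((k : ℝ) * Real.pi) ^ 2 / 2 := by
  have hk0 : (0:ℝ) < (k : ℝ) := by exact_mod_cast hk
  have := Real.pi_pos
  positivity

lemma base_ne (k : ℕ) (hk : 1 ≤ k) (z : ℝ) : base k z ≠ 0 := by
  intro h
  have h1 := base_re k z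
  rw [h, Complex.zero_re] at h1
  have h2 := pi_sq_pos k hk
  linarith

lemma Lam1_sq (k : ℕ) (hk : 1 ≤ k) (z : ℝ) : Lam1 k z * Lam1 k z = base k z := by
  rw [Lam1_eq, ← Complex.cpow_add _ _ (base_ne k hk z)]
  norm_num

lemma Aexp_neg (l : ℂ) (x : ℝ) : Aexp (-l) x = -Aexp l x := by
  simp only [Aexp, neg_neg]
  ring

lemma Ffun_neg (k : ℕ) (l : ℂ) : Ffun k (-l) = Ffun k l := by
  simp only [Ffun, Aexp_neg, norm_neg]

lemma Dfun_neg (l : ℂ) : Dfun (-l) = Dfun l := by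
  simp only [Dfun, neg_neg]
  rw [← norm_neg]
  ring_nf

lemma Psi_neg (k : ℕ) (l : ℂ) (z : ℝ) : Psi k (-l) z = Psi k l z := by
  simp only [Psi, Ffun_neg, Dfun_neg]

lemma Aexp_conj (l : ℂ) (x : ℝ) :
    Aexp ((starRingEnd ℂ) l) x = (starRingEnd ℂ) (Aexp l x) := by
  simp only [Aexp, map_add, map_sub, map_mul, map_one, ← Complex.exp_conj, map_neg,
    Complex.conj_ofReal]

lemma Ffun_conj (k : ℕ) (l : ℂ) : Ffun k ((starRingEnd ℂ) l) = Ffun k l := by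
  simp only [Ffun, Aexp_conj, Complex.norm_conj]

lemma Dfun_conj (l : ℂ) : Dfun ((starRingEnd ℂ) l) = Dfun l := by
  simp only [Dfun, ← map_neg, Complex.exp_conj, ← map_sub, Complex.norm_conj]

lemma exp_sub_exp_ne (k : ℕ) (hk : 1 ≤ k) (z : ℝ) :
    Complex.exp (Lam1 k z) - Complex.exp (-(Lam1 k z)) ≠ 0 := by
  rw [sub_ne_zero]
  intro h
  obtain ⟨n, hn⟩ := Complex.exp_eq_exp_iff_exists_int.mp h
  have hl : Lam1 k z = (n : ℂ) * (Real.pi : ℂ) * Complex.I := by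
    linear_combination hn / 2
  have hb : base k z = -((n : ℂ) ^ 2 * (Real.pi : ℂ) ^ 2) := by
    rw [← Lam1_sq k hk z, hl]
    ring_nf
    rw [Complex.I_sq]
    ring
  have hre : -(((k : ℝ) * Real.pi) ^ 2 / 2) = -((n : ℝ) ^ 2 * Real.pi ^ 2) := by
    have h1 := base_re k z
    rw [hb] at h1
    rw [← h1]
    norm_cast
  have hpi := Real.pi_pos
  have hk2 : (k : ℝ) ^ 2 = 2 * (n : ℝ) ^ 2 := by
    have h2 : (k : ℝ) ^ 2 * Real.pi ^ 2 = 2 * ((n : ℝ) ^ 2 * Real.pi ^ 2) := by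
      nlinarith [hre]
    have hpi2 : (0:ℝ) < Real.pi ^ 2 := by positivity
    nlinarith
  have hkpos : (0:ℝ) < (k : ℝ) := by exact_mod_cast hk
  have hn0 : (n : ℝ) ≠ 0 := by
    intro h0
    rw [h0] at hk2
    nlinarith
  have hq : ((k : ℝ) / |(n : ℝ)|) ^ 2 = 2 := by
    rw [div_pow, sq_abs]
    rw [hk2]
    field_simp
  have hsqrt : Real.sqrt 2 = (k : ℝ) / |(n : ℝ)| := by
    rw [← hq, Real.sqrt_sq (by positivity)]
  exact irrational_sqrt_two ⟨(k : ℚ) / |(n : ℚ)|, by push_cast; rw [hsqrt]⟩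

lemma Dfun_Lam1_ne (k : ℕ) (hk : 1 ≤ k) (z : ℝ) : Dfun (Lam1 k z) ≠ 0 := by
  simp only [Dfun]
  exact pow_ne_zero _ (norm_ne_zero_iff.mpr (exp_sub_exp_ne k hk z))

lemma cont_base (k : ℕ) : Continuous (base k) := by
  unfold base
  fun_prop

lemma cont_Ffun (k : ℕ) : Continuous (Ffun k) := by
  have h : Continuous (Function.uncurry fun (l : ℂ) (x : ℝ) =>
      ‖Aexp l x‖ ^ 2 * Real.cos ((k : ℝ) * Real.pi * x)) := by
    unfold Function.uncurry Aexp
    fun_prop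
  exact intervalIntegral.continuous_parametric_intervalIntegral_of_continuous' h 0 1

lemma cont_Dfun : Continuous Dfun := by
  unfold Dfun
  fun_prop

lemma contAt_Psi (k : ℕ) (hk : 1 ≤ k) (l₀ : ℂ) (z₀ : ℝ) (hD : Dfun l₀ ≠ 0) :
    ContinuousAt (fun p : ℂ × ℝ => Psi k p.1 p.2) (l₀, z₀) := by
  apply ContinuousAt.div
  · exact ((cont_Ffun k).comp continuous_fst).continuousAt
  · exact (((continuous_snd.pow 2).add continuous_const).mul
      (cont_Dfun.comp continuous_fst)).continuousAt
  · apply mul_ne_zero _ hD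
    have h1 := pi_sq_pos k hk
    have : (0:ℝ) < z₀ ^ 2 + ((k : ℝ) * Real.pi) ^ 4 / 4 := by nlinarith
    exact ne_of_gt this

lemma Lam1_exp_log (k : ℕ) (hk : 1 ≤ k) (z : ℝ) :
    Lam1 k z = Complex.exp (Complex.log (base k z) * ((1:ℂ)/2)) := by
  rw [Lam1_eq, Complex.cpow_def_of_ne_zero (base_ne k hk z)]

lemma tendsto_right (k : ℕ) (hk : 1 ≤ k) :
    Filter.Tendsto (Lam1 k) (nhdsWithin 0 (Ioi 0)) (nhds (Lam1 k 0)) := by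
  have hre : (base k 0).re < 0 := by
    rw [base_re]
    exact neg_lt_zero.mpr (pi_sq_pos k hk)
  have him : (base k 0).im = 0 := base_im k 0
  have hlog : ContinuousWithinAt Complex.log {w : ℂ | 0 ≤ w.im} (base k 0) :=
    Complex.continuousWithinAt_log_of_re_neg_of_im_zero hre him
  have hbase : Filter.Tendsto (base k) (nhdsWithin 0 (Ioi 0))
      (nhdsWithin (base k 0) {w : ℂ | 0 ≤ w.im}) := by
    rw [tendsto_nhdsWithin_iff]
    refine ⟨((cont_base k).tendsto _).mono_left nhdsWithin_le_nhds, ?_⟩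
    filter_upwards [self_mem_nhdsWithin] with x hx
    simp only [mem_setOf_eq, base_im]
    exact le_of_lt hx
  have h := hlog.tendsto.comp hbase
  have h2 := (Complex.continuous_exp.tendsto _).comp (h.mul_const ((1:ℂ)/2))
  have heq : (fun z => Complex.exp ((Complex.log (base k z)) * ((1:ℂ)/2))) = Lam1 k := by
    funext z
    rw [← Lam1_exp_log k hk z]
  rw [Lam1_exp_log k hk 0]
  exact heq ▸ h2

lemma exp_neg_pi_half (A : ℂ) :
    Complex.exp ((A - Real.pi * Complex.I) * ((1:ℂ)/2))
      = -Complex.exp ((A + Real.pi * Complex.I) * ((1:ℂ)/2)) := by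
  have h1 : (A - Real.pi * Complex.I) * ((1:ℂ)/2)
      = (A + Real.pi * Complex.I) * ((1:ℂ)/2) + (-(Real.pi * Complex.I)) := by ring
  rw [h1, Complex.exp_add, Complex.exp_neg, Complex.exp_pi_mul_I]
  norm_num

lemma tendsto_left (k : ℕ) (hk : 1 ≤ k) :
    Filter.Tendsto (Lam1 k) (nhdsWithin 0 (Iio 0)) (nhds (-(Lam1 k 0))) := by
  have hre : (base k 0).re < 0 := by
    rw [base_re]
    exact neg_lt_zero.mpr (pi_sq_pos k hk)
  have him : (base k 0).im = 0 := base_im k 0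
  have hlog := Complex.tendsto_log_nhdsWithin_im_neg_of_re_neg_of_im_zero hre him
  have hbase : Filter.Tendsto (base k) (nhdsWithin 0 (Iio 0))
      (nhdsWithin (base k 0) {w : ℂ | w.im < 0}) := by
    rw [tendsto_nhdsWithin_iff]
    refine ⟨((cont_base k).tendsto _).mono_left nhdsWithin_le_nhds, ?_⟩
    filter_upwards [self_mem_nhdsWithin] with x hx
    simpa only [mem_setOf_eq, base_im, mem_Iio] using hx
  have h := hlog.comp hbase
  have h2 := (Complex.continuous_exp.tendsto _).comp (h.mul_const ((1:ℂ)/2))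
  have heq : (fun z => Complex.exp ((Complex.log (base k z)) * ((1:ℂ)/2))) = Lam1 k := by
    funext z
    rw [← Lam1_exp_log k hk z]
  have harg : Complex.arg (base k 0) = Real.pi := Complex.arg_eq_pi_iff.mpr ⟨hre, him⟩
  have hlog0 : Complex.log (base k 0)
      = (Real.log (‖base k 0‖) : ℂ) + Real.pi * Complex.I := by
    rw [Complex.log, harg]
  have hval : Complex.exp ((Real.log (‖base k 0‖) - Real.pi * Complex.I) * ((1:ℂ)/2))
      = -(Lam1 k 0) := by
    rw [exp_neg_pi_half, Lam1_exp_log k hk 0, hlog0]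
  rw [← hval]
  have h3 : ((Real.log (‖base k 0‖) : ℂ) - Real.pi * Complex.I) * ((1:ℂ)/2)
      = (Real.log (‖base k 0‖) - Real.pi * Complex.I) * ((1:ℂ)/2) := rfl
  exact heq ▸ h2

lemma base_conj (k : ℕ) (z : ℝ) : base k (-z) = (starRingEnd ℂ) (base k z) := by
  rw [base_eq, base_eq]
  simp only [map_add, map_mul, Complex.conj_ofReal, Complex.conj_I]
  push_cast
  ring

lemma Lam1_conj (k : ℕ) (z : ℝ) (hz : z ≠ 0) :
    Lam1 k (-z) = (starRingEnd ℂ) (Lam1 k z) := by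
  have harg : Complex.arg (base k z) ≠ Real.pi := by
    intro h
    rw [Complex.arg_eq_pi_iff] at h
    have := h.2
    rw [base_im] at this
    exact hz this
  have hconjhalf : (starRingEnd ℂ) ((1:ℂ)/2) = (1:ℂ)/2 := by
    rw [map_div₀, map_one, map_ofNat]
  rw [Lam1_eq, Lam1_eq, base_conj, Complex.conj_cpow _ _ harg, hconjhalf]

/-- Proposition 3.1, Assertion 1: `Ω_k` is continuous and even. -/
theorem statement13 (k : ℕ) (hk : 1 ≤ k) (hke : Even k) :
    Continuous (Omega k) ∧ ∀ z : ℝ, Omega k z = Omega k (-z) := by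
  constructor
  · have hfun : Omega k = fun z => Psi k (Lam1 k z) z := rfl
    rw [hfun]
    rw [continuous_iff_continuousAt]
    intro z
    by_cases hz : z = 0
    · subst hz
      rw [continuousAt_iff_continuous_left'_right']
      constructor
      · have h1 : Filter.Tendsto (fun z : ℝ => (Lam1 k z, z)) (nhdsWithin 0 (Iio 0))
            (nhds (-(Lam1 k 0), (0:ℝ))) :=
          (tendsto_left k hk).prodMk_nhds
            ((continuous_id.tendsto 0).mono_left nhdsWithin_le_nhds)
        have h2 := (contAt_Psi k hk (-(Lam1 k 0)) 0
          (by rw [Dfun_neg]; exact Dfun_Lam1_ne k hk 0)).tendsto.comp h1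
        have h3 : Psi k (-(Lam1 k 0)) 0 = Psi k (Lam1 k 0) 0 := Psi_neg k (Lam1 k 0) 0
        rw [h3] at h2
        exact h2
      · have h1 : Filter.Tendsto (fun z : ℝ => (Lam1 k z, z)) (nhdsWithin 0 (Ioi 0))
            (nhds (Lam1 k 0, (0:ℝ))) :=
          (tendsto_right k hk).prodMk_nhds
            ((continuous_id.tendsto 0).mono_left nhdsWithin_le_nhds)
        have h2 := (contAt_Psi k hk (Lam1 k 0) 0 (Dfun_Lam1_ne k hk 0)).tendsto.comp h1
        exact h2
    · have hsp : base k z ∈ Complex.slitPlane :=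
        Complex.mem_slitPlane_iff.mpr (Or.inr (by rw [base_im]; exact hz))
      have hLam : ContinuousAt (Lam1 k) z := by
        have h := (continuousAt_cpow_const (b := (1:ℂ)/2) hsp).comp
          ((cont_base k).continuousAt (x := z))
        exact h
      have hinner : ContinuousAt (fun x : ℝ => (Lam1 k x, x)) z :=
        hLam.prodMk continuousAt_id
      have hinner' : Filter.Tendsto (fun x : ℝ => (Lam1 k x, x)) (nhds z)
          (nhds (Lam1 k z, z)) := hinner.tendsto
      have h4 := (contAt_Psi k hk (Lam1 k z) z (Dfun_Lam1_ne k hk z)).tendsto.comp hinner'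
      exact h4
  · intro z
    by_cases hz : z = 0
    · subst hz
      rw [neg_zero]
    · rw [Omega_eq, Omega_eq, Lam1_conj k z hz]
      simp only [Psi, Ffun_conj, Dfun_conj, neg_sq]
end
end
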